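/- Every extreme point of the polytope of doubly stochastic n×n matrices is a permutation matrix (Birkhoff–von Neumann theorem). -/

import Mathlib

theorem coe_doublyStochastic_eq_setOf {R n : Type*} [Fintype n] [DecidableEq n] [Semiring R]
    [PartialOrder R] [IsOrderedRing R] :
    (doublyStochastic R n : Set (Matrix n n R)) =
      {A | (∀ i j, 0 ≤ A i j) ∧ (∀ i, ∑ j, A i j = 1) ∧ (∀ j, ∑ i, A i j = 1)} := by
  ext A
  simp [mem_doublyStochastic_iff_sum]

/-- Birkhoff–von Neumann: every extreme point of the polytope of doubly stochastic
`n × n` matrices is a permutation matrix. -/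
theorem birkhoff_von_neumann_extreme_points (n : ℕ) (M : Matrix (Fin n) (Fin n) ℝ)
    (hM : M ∈ Set.extremePoints ℝ
      {A : Matrix (Fin n) (Fin n) ℝ |
        (∀ i j, 0 ≤ A i j) ∧ (∀ i, ∑ j, A i j = 1) ∧ (∀ j, ∑ i, A i j = 1)}) :
    ∃ σ : Equiv.Perm (Fin n), M = σ.permMatrix ℝ := by
  rw [← coe_doublyStochastic_eq_setOf, doublyStochastic_eq_convexHull_permMatrix] at hM
  obtain ⟨σ, rfl⟩ := extremePoints_convexHull_subset hM
  exact ⟨σ, rfl⟩
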